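/- arXiv:2111.01376 — 5 statements merged into one kernel-verified Lean document; each statement's English description precedes it below -/
import Mathlib

section
/- The Jacobian of the rotational stiffness map Θ ↦ Nᵀ(Θ) K_τ Θ has determinant k_r k_p k_y / cos p, where k_r, k_p, k_y are the diagonal entries of K_τ; hence the Jacobian is invertible on the region |p| < π/2. -/
/-!
The transpose `N(Θ)ᵀ` factors as `R_z(w) B(p)`: a rotation about the third axis, of determinant 1,
times a matrix depending on the pitch alone. Differentiating `Θ ↦ R_z(w) (B(p) K_τ Θ)` by the product
rule, with `R_z'(w) = R_z(w) G`, the Jacobian is `R_z(w) M`, where `M` is `B(p) K_τ` plus rank-one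
corrections in its `p`- and `w`-columns. For diagonal `K_τ` these corrections lie above the
diagonal, so `M` is upper triangular with diagonal `k_r / cos p, k_p, k_y`.
-/

open Real Matrix

/-- The gimbal-to-spatial torque conversion matrix of the bushing model. -/
noncomputable def Nmat (p w : ℝ) : Matrix (Fin 3) (Fin 3) ℝ :=
  !![Real.cos w / Real.cos p, Real.sin w / Real.cos p, 0;
     -Real.sin w, Real.cos w, 0;
     Real.cos w * Real.tan p, Real.sin w * Real.tan p, 1]

/-- The rotational stiffness map `Θ ↦ N(Θ)ᵀ K_τ Θ` of the bushing model,
with `Θ = (r, p, w)` encoded as a function `Fin 3 → ℝ`. -/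
noncomputable def rotStiffness (Kτ : Matrix (Fin 3) (Fin 3) ℝ) (Θ : Fin 3 → ℝ) :
    Fin 3 → ℝ :=
  (Nmat (Θ 1) (Θ 2))ᵀ.mulVec (Kτ.mulVec Θ)

section

variable {𝕜 E : Type*} [NontriviallyNormedField 𝕜] [NormedAddCommGroup E] [NormedSpace 𝕜 E]
  {m n : Type*} [Fintype n]

theorem HasFDerivAt.matrix_mulVec {R : 𝕜 → Matrix m n 𝕜} {R' : Matrix m n 𝕜} {φ : E → 𝕜}
    {φ' : E →L[𝕜] 𝕜} {u : E → n → 𝕜} {u' : E →L[𝕜] n → 𝕜} {L : E →L[𝕜] m → 𝕜} {x : E}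
    (hR : ∀ i j, HasDerivAt (fun t => R t i j) (R' i j) (φ x)) (hφ : HasFDerivAt φ φ' x)
    (hu : HasFDerivAt u u' x) (hL : ∀ v, L v = φ' v • (R' *ᵥ u x) + R (φ x) *ᵥ u' v) :
    HasFDerivAt (fun y => R (φ y) *ᵥ u y) L x := by
  refine hasFDerivAt_pi'.2 fun i => ?_
  have hsum := HasFDerivAt.fun_sum (u := Finset.univ) fun j _ =>
    ((hR i j).comp_hasFDerivAt x hφ).mul ((hasFDerivAt_apply j _).comp x hu)
  refine hsum.congr_fderiv (ContinuousLinearMap.ext fun v => ?_)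
  simp only [Function.comp_apply, _root_.sum_apply, _root_.add_apply, _root_.smul_apply,
    ContinuousLinearMap.comp_apply, ContinuousLinearMap.proj_apply, smul_eq_mul, hL,
    Pi.add_apply, Pi.smul_apply, mulVec, dotProduct]
  rw [Finset.mul_sum, ← Finset.sum_add_distrib]
  exact Finset.sum_congr rfl fun _ _ => by ring

end

noncomputable def rotZ (w : ℝ) : Matrix (Fin 3) (Fin 3) ℝ :=
  !![cos w, -sin w, 0; sin w, cos w, 0; 0, 0, 1]

def rotZGenerator : Matrix (Fin 3) (Fin 3) ℝ :=
  !![0, -1, 0; 1, 0, 0; 0, 0, 0]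

theorem det_rotZ (w : ℝ) : (rotZ w).det = 1 := by
  simp [rotZ, det_fin_three, ← sq]

theorem hasDerivAt_rotZ_apply (w : ℝ) (i j : Fin 3) :
    HasDerivAt (fun t => rotZ t i j) ((rotZ w * rotZGenerator) i j) w := by
  fin_cases i <;> fin_cases j <;> simp [rotZ, rotZGenerator, mul_apply, Fin.sum_univ_three] <;>
    first
    | exact hasDerivAt_const _ _
    | exact hasDerivAt_cos w
    | exact hasDerivAt_sin w
    | exact (hasDerivAt_sin w).neg

noncomputable def pitchFactor (p : ℝ) : Matrix (Fin 3) (Fin 3) ℝ :=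
  !![(cos p)⁻¹, 0, tan p; 0, 1, 0; 0, 0, 1]

noncomputable def pitchFactorDeriv (p : ℝ) : Matrix (Fin 3) (Fin 3) ℝ :=
  !![sin p / cos p ^ 2, 0, 1 / cos p ^ 2; 0, 0, 0; 0, 0, 0]

theorem hasDerivAt_pitchFactor_apply {p : ℝ} (hp : cos p ≠ 0) (i j : Fin 3) :
    HasDerivAt (fun t => pitchFactor t i j) (pitchFactorDeriv p i j) p := by
  fin_cases i <;> fin_cases j <;> simp [pitchFactor, pitchFactorDeriv] <;>
    first
    | exact hasDerivAt_const _ _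
    | exact ((hasDerivAt_cos p).inv hp).congr_deriv (by ring)
    | exact (hasDerivAt_tan hp).congr_deriv (one_div _)

theorem Nmat_transpose (p w : ℝ) : (Nmat p w)ᵀ = rotZ w * pitchFactor p := by
  ext i j
  fin_cases i <;> fin_cases j <;>
    simp [Nmat, rotZ, pitchFactor, mul_apply, Fin.sum_univ_three, div_eq_mul_inv]

theorem rotStiffness_eq_rotZ_mulVec (K : Matrix (Fin 3) (Fin 3) ℝ) (Θ : Fin 3 → ℝ) :
    rotStiffness K Θ = rotZ (Θ 2) *ᵥ (pitchFactor (Θ 1) *ᵥ (K *ᵥ Θ)) := by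
  rw [rotStiffness, Nmat_transpose, ← mulVec_mulVec]

noncomputable def pitchJacobian (K : Matrix (Fin 3) (Fin 3) ℝ) (Θ : Fin 3 → ℝ) :
    Matrix (Fin 3) (Fin 3) ℝ :=
  vecMulVec (pitchFactorDeriv (Θ 1) *ᵥ (K *ᵥ Θ)) (Pi.single 1 1) + pitchFactor (Θ 1) * K

noncomputable def unrotatedJacobian (K : Matrix (Fin 3) (Fin 3) ℝ) (Θ : Fin 3 → ℝ) :
    Matrix (Fin 3) (Fin 3) ℝ :=
  vecMulVec (rotZGenerator *ᵥ (pitchFactor (Θ 1) *ᵥ (K *ᵥ Θ))) (Pi.single 2 1)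
    + pitchJacobian K Θ

theorem hasFDerivAt_pitchFactor_mulVec (K : Matrix (Fin 3) (Fin 3) ℝ) {Θ : Fin 3 → ℝ}
    (hΘ : cos (Θ 1) ≠ 0) :
    HasFDerivAt (fun Θ => pitchFactor (Θ 1) *ᵥ (K *ᵥ Θ))
      (toLin' (pitchJacobian K Θ)).toContinuousLinearMap Θ := by
  refine HasFDerivAt.matrix_mulVec (hasDerivAt_pitchFactor_apply hΘ)
    (hasFDerivAt_apply (𝕜 := ℝ) 1 Θ) (toLin' K).toContinuousLinearMap.hasFDerivAt fun v => ?_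
  simp [pitchJacobian, vecMulVec_mulVec, mulVec_mulVec]

theorem hasFDerivAt_rotStiffness (K : Matrix (Fin 3) (Fin 3) ℝ) {Θ : Fin 3 → ℝ}
    (hΘ : cos (Θ 1) ≠ 0) :
    HasFDerivAt (rotStiffness K)
      (toLin' (rotZ (Θ 2) * unrotatedJacobian K Θ)).toContinuousLinearMap Θ := by
  rw [funext (rotStiffness_eq_rotZ_mulVec K)]
  refine HasFDerivAt.matrix_mulVec (hasDerivAt_rotZ_apply _) (hasFDerivAt_apply (𝕜 := ℝ) 2 Θ)
    (hasFDerivAt_pitchFactor_mulVec K hΘ) fun v => ?_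
  simp [unrotatedJacobian, vecMulVec_mulVec, mulVec_mulVec, mul_add, Matrix.mul_assoc]

theorem unrotatedJacobian_diagonal (kr kp ky : ℝ) (Θ : Fin 3 → ℝ) :
    unrotatedJacobian (diagonal ![kr, kp, ky]) Θ =
      !![kr / cos (Θ 1), (kr * Θ 0 * sin (Θ 1) + ky * Θ 2) / cos (Θ 1) ^ 2,
          ky * tan (Θ 1) - kp * Θ 1;
        0, kp, kr * Θ 0 / cos (Θ 1) + ky * Θ 2 * tan (Θ 1);
        0, 0, ky] := by
  ext i j
  simp only [unrotatedJacobian, pitchJacobian, Matrix.add_apply, vecMulVec_apply, mul_apply,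
    mulVec, dotProduct, Fin.sum_univ_three]
  fin_cases i <;> fin_cases j <;>
    simp [pitchFactor, pitchFactorDeriv, rotZGenerator] <;> ring

theorem det_unrotatedJacobian_diagonal (kr kp ky : ℝ) (Θ : Fin 3 → ℝ) :
    (unrotatedJacobian (diagonal ![kr, kp, ky]) Θ).det = kr * kp * ky / cos (Θ 1) := by
  rw [unrotatedJacobian_diagonal, det_fin_three]
  simp only [of_apply, cons_val', cons_val_zero, cons_val_fin_one, cons_val_one, cons_val,
    mul_zero, sub_zero, zero_mul, add_zero]
  ring

/-- The Jacobian of the rotational stiffness map has determinant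
`k_r k_p k_y / cos p`, hence is invertible on `|p| < π/2`. -/
theorem rotStiffness_jacobian_det (kr kp ky : ℝ)
    (hkr : 0 < kr) (hkp : 0 < kp) (hky : 0 < ky)
    (Θ : Fin 3 → ℝ) (hp : |Θ 1| < Real.pi / 2) :
    LinearMap.det
        ((fderiv ℝ (rotStiffness (Matrix.diagonal ![kr, kp, ky])) Θ :
          (Fin 3 → ℝ) →L[ℝ] (Fin 3 → ℝ)) : (Fin 3 → ℝ) →ₗ[ℝ] (Fin 3 → ℝ))
      = kr * kp * ky / Real.cos (Θ 1) ∧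
    IsUnit (LinearMap.det
        ((fderiv ℝ (rotStiffness (Matrix.diagonal ![kr, kp, ky])) Θ :
          (Fin 3 → ℝ) →L[ℝ] (Fin 3 → ℝ)) : (Fin 3 → ℝ) →ₗ[ℝ] (Fin 3 → ℝ))) := by
  have hcos : 0 < cos (Θ 1) := cos_pos_of_mem_Ioo (abs_lt.mp hp)
  rw [(hasFDerivAt_rotStiffness _ hcos.ne').fderiv, LinearMap.coe_toContinuousLinearMap,
    LinearMap.det_toLin', det_mul, det_rotZ, one_mul, det_unrotatedJacobian_diagonal]
  exact ⟨rfl, (div_pos (by positivity) hcos).ne'.isUnit⟩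
end

section
/- For every Θ in the region |p| < π/2, the rotational stiffness map Θ ↦ Nᵀ(Θ) K_τ Θ is a local diffeomorphism at Θ (its derivative is a linear isomorphism), provided K_τ is positive definite diagonal. -/
open Real Matrix

/-!
For diagonal `K_τ` the stiffness map reads `τ = (R(w) (A, k_p p), k_y w)`, where `R(w)` is the
planar rotation by the yaw angle `w` and `A = (k_r r + k_y w sin p) / cos p`. Wherever
`cos p ≠ 0` it has an explicit smooth left inverse: `w = τ₂ / k_y`, rotating back by `-w`
recovers `A` and `k_p p`, and then `r`. A differentiable left inverse makes the derivative
injective, hence an isomorphism of `ℝ³`.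
-/

open Filter Topology

section LeftInverse

variable {𝕜 E F : Type*} [NontriviallyNormedField 𝕜] [NormedAddCommGroup E] [NormedSpace 𝕜 E]
  [NormedAddCommGroup F] [NormedSpace 𝕜 F] {x : E}

theorem fderiv_comp_fderiv_of_leftInverse {f : E → F} {g : F → E} (hf : DifferentiableAt 𝕜 f x)
    (hg : DifferentiableAt 𝕜 g (f x)) (hgf : ∀ᶠ y in 𝓝 x, g (f y) = y) :
    (fderiv 𝕜 g (f x)).comp (fderiv 𝕜 f x) = ContinuousLinearMap.id 𝕜 E :=
  (hg.hasFDerivAt.comp x hf.hasFDerivAt).unique <|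
    (hasFDerivAt_id x).congr_of_eventuallyEq hgf

theorem exists_continuousLinearEquiv_eq_fderiv_of_leftInverse [FiniteDimensional 𝕜 E]
    {f g : E → E} (hf : DifferentiableAt 𝕜 f x)
    (hg : DifferentiableAt 𝕜 g (f x)) (hgf : ∀ᶠ y in 𝓝 x, g (f y) = y) :
    ∃ e : E ≃L[𝕜] E, (e : E →L[𝕜] E) = fderiv 𝕜 f x := by
  have hleft := fderiv_comp_fderiv_of_leftInverse hf hg hgf
  have hright : (fderiv 𝕜 f x).comp (fderiv 𝕜 g (f x)) = ContinuousLinearMap.id 𝕜 E := by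
    apply ContinuousLinearMap.coe_injective
    exact (LinearMap.comp_eq_id_comm 𝕜 E).2 (congrArg ContinuousLinearMap.toLinearMap hleft)
  exact ⟨.equivOfInverse _ _ (fun v => congrArg (· v) hleft) (fun v => congrArg (· v) hright),
    rfl⟩

end LeftInverse

section RotStiffness

variable {kr kp ky : ℝ}

noncomputable def rotStiffnessInv (kr kp ky : ℝ) (τ : Fin 3 → ℝ) : Fin 3 → ℝ :=
  let w := τ 2 / ky
  let p := (cos w * τ 1 - sin w * τ 0) / kp
  ![(cos p * (cos w * τ 0 + sin w * τ 1) - sin p * τ 2) / kr, p, w]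

theorem differentiable_rotStiffnessInv : Differentiable ℝ (rotStiffnessInv kr kp ky) := by
  rw [differentiable_pi]
  intro i
  fin_cases i <;>
    simp only [rotStiffnessInv, Fin.zero_eta, Fin.mk_one, Fin.reduceFinMk, cons_val] <;> fun_prop

theorem differentiableAt_rotStiffness (K : Matrix (Fin 3) (Fin 3) ℝ) {Θ : Fin 3 → ℝ}
    (hc : cos (Θ 1) ≠ 0) : DifferentiableAt ℝ (rotStiffness K) Θ := by
  rw [differentiableAt_pi]
  intro i
  fin_cases i <;>
    simp only [rotStiffness, Nmat, mulVec, dotProduct, Fin.sum_univ_three, transpose_apply,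
      of_apply, cons_val', cons_val_zero, cons_val_one, cons_val, cons_val_fin_one, Fin.zero_eta,
      Fin.mk_one, Fin.reduceFinMk, tan_eq_sin_div_cos] <;>
    fun_prop (disch := exact hc)

variable (Θ : Fin 3 → ℝ)

theorem rotStiffness_diagonal_apply_zero :
    rotStiffness (diagonal ![kr, kp, ky]) Θ 0 =
      cos (Θ 2) * ((kr * Θ 0 + ky * Θ 2 * sin (Θ 1)) / cos (Θ 1)) - sin (Θ 2) * (kp * Θ 1) := by
  simp only [rotStiffness, Nmat, mulVec, dotProduct, Fin.sum_univ_three, transpose_apply, of_apply,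
    cons_val', cons_val_zero, cons_val_one, cons_val, cons_val_fin_one, diagonal_apply,
    tan_eq_sin_div_cos, Fin.reduceEq, if_true, if_false]
  ring

theorem rotStiffness_diagonal_apply_one :
    rotStiffness (diagonal ![kr, kp, ky]) Θ 1 =
      sin (Θ 2) * ((kr * Θ 0 + ky * Θ 2 * sin (Θ 1)) / cos (Θ 1)) + cos (Θ 2) * (kp * Θ 1) := by
  simp only [rotStiffness, Nmat, mulVec, dotProduct, Fin.sum_univ_three, transpose_apply, of_apply,
    cons_val', cons_val_zero, cons_val_one, cons_val, cons_val_fin_one, diagonal_apply,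
    tan_eq_sin_div_cos, Fin.reduceEq, if_true, if_false]
  ring

theorem rotStiffness_diagonal_apply_two :
    rotStiffness (diagonal ![kr, kp, ky]) Θ 2 = ky * Θ 2 := by
  simp [rotStiffness, Nmat, mulVec, dotProduct, Fin.sum_univ_three]

theorem rotStiffnessInv_rotStiffness (hkr : kr ≠ 0) (hkp : kp ≠ 0) (hky : ky ≠ 0)
    (hc : cos (Θ 1) ≠ 0) :
    rotStiffnessInv kr kp ky (rotStiffness (diagonal ![kr, kp, ky]) Θ) = Θ := by
  have hw : rotStiffness (diagonal ![kr, kp, ky]) Θ 2 / ky = Θ 2 := by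
    rw [rotStiffness_diagonal_apply_two, mul_div_cancel_left₀ _ hky]
  have hp : (cos (Θ 2) * rotStiffness (diagonal ![kr, kp, ky]) Θ 1 -
      sin (Θ 2) * rotStiffness (diagonal ![kr, kp, ky]) Θ 0) / kp = Θ 1 := by
    rw [div_eq_iff hkp, rotStiffness_diagonal_apply_zero, rotStiffness_diagonal_apply_one]
    linear_combination kp * Θ 1 * sin_sq_add_cos_sq (Θ 2)
  have hr : cos (Θ 2) * rotStiffness (diagonal ![kr, kp, ky]) Θ 0 +
      sin (Θ 2) * rotStiffness (diagonal ![kr, kp, ky]) Θ 1 =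
        (kr * Θ 0 + ky * Θ 2 * sin (Θ 1)) / cos (Θ 1) := by
    rw [rotStiffness_diagonal_apply_zero, rotStiffness_diagonal_apply_one]
    linear_combination (kr * Θ 0 + ky * Θ 2 * sin (Θ 1)) / cos (Θ 1) * sin_sq_add_cos_sq (Θ 2)
  ext i
  fin_cases i
  · simp only [rotStiffnessInv, hw, hp, hr, Fin.zero_eta, cons_val_zero]
    rw [rotStiffness_diagonal_apply_two]
    field_simp
    ring
  · simp [rotStiffnessInv, hw, hp]
  · simp [rotStiffnessInv, hw]

end RotStiffness

/-- At every `Θ` with `|p| < π/2`, the rotational stiffness map is a local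
diffeomorphism: its derivative is a continuous linear isomorphism. -/
theorem rotStiffness_local_diffeo (kr kp ky : ℝ)
    (hkr : 0 < kr) (hkp : 0 < kp) (hky : 0 < ky)
    (Θ : Fin 3 → ℝ) (hp : |Θ 1| < Real.pi / 2) :
    ∃ e : (Fin 3 → ℝ) ≃L[ℝ] (Fin 3 → ℝ),
      (e : (Fin 3 → ℝ) →L[ℝ] (Fin 3 → ℝ)) =
        fderiv ℝ (rotStiffness (Matrix.diagonal ![kr, kp, ky])) Θ := by
  have hc : cos (Θ 1) ≠ 0 := (cos_pos_of_mem_Ioo (abs_lt.1 hp)).ne'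
  have hc_near : ∀ᶠ Θ' in 𝓝 Θ, cos (Θ' 1) ≠ 0 :=
    (continuous_cos.comp (continuous_apply 1)).continuousAt.eventually_ne hc
  refine exists_continuousLinearEquiv_eq_fderiv_of_leftInverse (g := rotStiffnessInv kr kp ky)
    (differentiableAt_rotStiffness _ hc) differentiable_rotStiffnessInv.differentiableAt ?_
  filter_upwards [hc_near] with Θ' hc'
  exact rotStiffnessInv_rotStiffness Θ' hkr.ne' hkp.ne' hky.ne' hc'
end

section
/- The full bushing stiffness map K : (x, Θ) ↦ (K_f x, N(Θ)ᵀ K_τ Θ) from ℝ³ × {Θ : |p| < π/2} to ℝ³ × ℝ³ is injective, assuming K_f and K_τ are positive definite diagonal matrices. -/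
/-!
For `Θ = (r, p, w)` the torque `N(Θ)ᵀ diag(k_r, k_p, k_y) Θ` has last coordinate `k_y w`, and its
first two coordinates are the vector `(k_r r / cos p + k_y w tan p, k_p p)` rotated by the yaw `w`.
So the last coordinate determines `w`; undoing the rotation then recovers `p`, and finally `r`,
which needs `cos p ≠ 0`. The force part is injective because `K_f` is diagonal with nonzero entries.
-/

open Real Matrix

theorem Matrix.IsDiag.mulVec_injective {n R : Type*} [Fintype n] [DecidableEq n]
    [Semiring R] [IsLeftCancelMulZero R] {A : Matrix n n R} (hA : A.IsDiag)
    (hdiag : ∀ i, A i i ≠ 0) : Function.Injective A.mulVec := by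
  intro v w hvw
  rw [← hA.diagonal_diag] at hvw
  funext i
  have hi := congrFun hvw i
  simp only [mulVec_diagonal, diag_apply] at hi
  exact mul_left_cancel₀ (hdiag i) hi

theorem eq_and_eq_of_rotate_eq {R : Type*} [CommRing R] {c s a b a' b' : R}
    (hcs : s ^ 2 + c ^ 2 = 1)
    (h₁ : c * a - s * b = c * a' - s * b') (h₂ : s * a + c * b = s * a' + c * b') :
    a = a' ∧ b = b' :=
  ⟨by linear_combination c * h₁ + s * h₂ - (a - a') * hcs,
   by linear_combination c * h₂ - s * h₁ - (b - b') * hcs⟩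

theorem rotStiffness_diagonal (kr kp ky : ℝ) (Θ : Fin 3 → ℝ) :
    rotStiffness (diagonal ![kr, kp, ky]) Θ =
      ![cos (Θ 2) * (kr * Θ 0 / cos (Θ 1) + ky * Θ 2 * tan (Θ 1)) - sin (Θ 2) * (kp * Θ 1),
        sin (Θ 2) * (kr * Θ 0 / cos (Θ 1) + ky * Θ 2 * tan (Θ 1)) + cos (Θ 2) * (kp * Θ 1),
        ky * Θ 2] := by
  ext i
  fin_cases i <;>
    simp only [rotStiffness, Nmat, mulVec, dotProduct, Fin.sum_univ_three, transpose_apply,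
      of_apply, diagonal_apply, cons_val', cons_val_zero, cons_val_one, cons_val, cons_val_fin_one,
      Fin.isValue, Fin.zero_eta, Fin.mk_one, Fin.reduceFinMk, Fin.reduceEq, if_true, if_false] <;> ring

theorem rotStiffness_diagonal_injective {kr kp ky : ℝ} (hkr : kr ≠ 0) (hkp : kp ≠ 0)
    (hky : ky ≠ 0) {Θ₁ Θ₂ : Fin 3 → ℝ} (hcos : cos (Θ₁ 1) ≠ 0)
    (h : rotStiffness (diagonal ![kr, kp, ky]) Θ₁ = rotStiffness (diagonal ![kr, kp, ky]) Θ₂) :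
    Θ₁ = Θ₂ := by
  rw [rotStiffness_diagonal, rotStiffness_diagonal] at h
  have hyaw : Θ₁ 2 = Θ₂ 2 := mul_left_cancel₀ hky (by simpa using congrFun h 2)
  obtain ⟨hroll, hpitch⟩ := eq_and_eq_of_rotate_eq (sin_sq_add_cos_sq (Θ₂ 2))
    (by simpa [hyaw] using congrFun h 0) (by simpa [hyaw] using congrFun h 1)
  have hp : Θ₁ 1 = Θ₂ 1 := mul_left_cancel₀ hkp hpitch
  rw [hp, add_left_inj, ← hp] at hroll
  have hr : Θ₁ 0 = Θ₂ 0 := mul_left_cancel₀ hkr ((div_left_inj' hcos).mp hroll)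
  ext i
  fin_cases i
  exacts [hr, hp, hyaw]

theorem bushing_stiffness_injective_general
    (Kf : Matrix (Fin 3) (Fin 3) ℝ) (hKfdiag : Kf.IsDiag)
    (hKfpos : ∀ i, 0 < Kf i i)
    (kr kp ky : ℝ) (hkr : 0 < kr) (hkp : 0 < kp) (hky : 0 < ky)
    (x₁ x₂ Θ₁ Θ₂ : Fin 3 → ℝ)
    (hp₁ : |Θ₁ 1| < Real.pi / 2)
    (hf : Kf.mulVec x₁ = Kf.mulVec x₂)
    (hτ : rotStiffness (Matrix.diagonal ![kr, kp, ky]) Θ₁ =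
          rotStiffness (Matrix.diagonal ![kr, kp, ky]) Θ₂) :
    x₁ = x₂ ∧ Θ₁ = Θ₂ :=
  ⟨hKfdiag.mulVec_injective (fun i => (hKfpos i).ne') hf,
   rotStiffness_diagonal_injective hkr.ne' hkp.ne' hky.ne'
     (cos_pos_of_mem_Ioo (abs_lt.mp hp₁)).ne' hτ⟩

/-- The full bushing stiffness map
`(x, Θ) ↦ (K_f x, N(Θ)ᵀ K_τ Θ)` is injective on `ℝ³ × {Θ : |p| < π/2}`
when `K_f` and `K_τ` are positive definite diagonal matrices. -/
theorem bushing_stiffness_injective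
    (Kf : Matrix (Fin 3) (Fin 3) ℝ) (hKfdiag : Kf.IsDiag)
    (hKfpos : ∀ i, 0 < Kf i i)
    (kr kp ky : ℝ) (hkr : 0 < kr) (hkp : 0 < kp) (hky : 0 < ky)
    (x₁ x₂ Θ₁ Θ₂ : Fin 3 → ℝ)
    (hp₁ : |Θ₁ 1| < Real.pi / 2) (hp₂ : |Θ₂ 1| < Real.pi / 2)
    (hf : Kf.mulVec x₁ = Kf.mulVec x₂)
    (hτ : rotStiffness (Matrix.diagonal ![kr, kp, ky]) Θ₁ =
          rotStiffness (Matrix.diagonal ![kr, kp, ky]) Θ₂) :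
    x₁ = x₂ ∧ Θ₁ = Θ₂ :=
  bushing_stiffness_injective_general Kf hKfdiag hKfpos kr kp ky hkr hkp hky x₁ x₂ Θ₁ Θ₂ hp₁ hf hτ
end

section
/- Assume K_τ = diag(k_r, k_p, k_y) with positive entries, and consider the rotational stiffness map Θ ↦ N(Θ)ᵀ K_τ Θ restricted to {(r,p,y) : |p| < π/2}. Then for any τ ∈ ℝ³ with |(τ_y cos(τ_z/k_y) − τ_x sin(τ_z/k_y))/k_p| < π/2, there exists Θ in this domain with N(Θ)ᵀ K_τ Θ = τ. -/
open Real Matrix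

/-- The rotational stiffness map restricted to `{Θ : |p| < π/2}` is surjective
onto the set of torques whose candidate pitch lies in `(-π/2, π/2)`. -/
theorem rotStiffness_surjective (kr kp ky : ℝ)
    (hkr : 0 < kr) (hkp : 0 < kp) (hky : 0 < ky)
    (τ : Fin 3 → ℝ)
    (hτ : |(τ 1 * Real.cos (τ 2 / ky) - τ 0 * Real.sin (τ 2 / ky)) / kp|
            < Real.pi / 2) :
    ∃ Θ : Fin 3 → ℝ, |Θ 1| < Real.pi / 2 ∧
      rotStiffness (Matrix.diagonal ![kr, kp, ky]) Θ = τ := by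
  set w := τ 2 / ky with hw
  set p := (τ 1 * Real.cos w - τ 0 * Real.sin w) / kp with hp
  set r := (Real.cos p * (τ 0 * Real.cos w + τ 1 * Real.sin w) - τ 2 * Real.sin p) / kr
    with hr
  have hplt : |p| < Real.pi / 2 := hτ
  have hcp : 0 < Real.cos p := Real.cos_pos_of_mem_Ioo ⟨(abs_lt.mp hplt).1, (abs_lt.mp hplt).2⟩
  have hcp' : Real.cos p ≠ 0 := ne_of_gt hcp
  refine ⟨![r, p, w], ?_, ?_⟩
  · simpa using hplt
  funext i
  have hpk : kp * p = τ 1 * Real.cos w - τ 0 * Real.sin w := by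
    rw [hp]; field_simp
  have hrk : kr * r = Real.cos p * (τ 0 * Real.cos w + τ 1 * Real.sin w) - τ 2 * Real.sin p := by
    rw [hr]; field_simp
  have hwk : ky * w = τ 2 := by rw [hw]; field_simp
  have hs := Real.sin_sq_add_cos_sq w
  fin_cases i
  · simp [rotStiffness, Nmat, mulVec, dotProduct, Fin.sum_univ_three,
      Matrix.diagonal, Real.tan_eq_sin_div_cos]
    field_simp
    linear_combination Real.cos w * hrk - Real.sin w * Real.cos p * hpk +
      Real.cos w * Real.sin p * hwk + τ 0 * Real.cos p * hs
  · simp [rotStiffness, Nmat, mulVec, dotProduct, Fin.sum_univ_three,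
      Matrix.diagonal, Real.tan_eq_sin_div_cos]
    field_simp
    linear_combination Real.sin w * hrk + Real.cos w * Real.cos p * hpk +
      Real.sin w * Real.sin p * hwk + τ 1 * Real.cos p * hs
  · simp [rotStiffness, Nmat, mulVec, dotProduct, Fin.sum_univ_three,
      Matrix.diagonal, Real.tan_eq_sin_div_cos]
    linear_combination hwk
end

section
/- For the hybrid 2-torque/1-angle control law, the angles (r, p, y) defined by y = y_d, p = (τ_y^d cos y_d − τ_x^d sin y_d)/k_p, and r = ((τ_x^d cos y_d + τ_y^d sin y_d) cos p − k_y y_d sin p)/k_r, when substituted into the forward bushing map τ = N(Θ)ᵀ K_τ Θ, yield first and second torque components τ_x = τ_x^d and τ_y = τ_y^d, assuming |p| < π/2. -/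
open Real Matrix

/-- Hybrid 2-torque/1-angle control: the closed-form angles achieve the
desired torques `τ_x^d` and `τ_y^d` (with yaw fixed to `y_d`). -/
theorem hybrid_two_torque_one_angle (kr kp ky : ℝ)
    (hkr : 0 < kr) (hkp : 0 < kp) (hky : 0 < ky)
    (τxd τyd yd : ℝ)
    (p r : ℝ)
    (hpdef : p = (τyd * Real.cos yd - τxd * Real.sin yd) / kp)
    (hrdef : r = ((τxd * Real.cos yd + τyd * Real.sin yd) * Real.cos p
                  - ky * yd * Real.sin p) / kr)
    (hprange : |p| < Real.pi / 2) :
    rotStiffness (Matrix.diagonal ![kr, kp, ky]) ![r, p, yd] 0 = τxd ∧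
    rotStiffness (Matrix.diagonal ![kr, kp, ky]) ![r, p, yd] 1 = τyd := by
  have hcp : Real.cos p ≠ 0 := by
    have := Real.cos_pos_of_mem_Ioo (by
      rw [abs_lt] at hprange
      constructor <;> [linarith [hprange.1]; linarith [hprange.2]] : p ∈ Set.Ioo (-(Real.pi/2)) (Real.pi/2))
    linarith
  have hkrr : kr * r = (τxd * Real.cos yd + τyd * Real.sin yd) * Real.cos p
                  - ky * yd * Real.sin p := by
    rw [hrdef]; field_simp
  have hkpp : kp * p = τyd * Real.cos yd - τxd * Real.sin yd := by
    rw [hpdef]; field_simp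
  have hsc := Real.sin_sq_add_cos_sq yd
  simp only [rotStiffness, Nmat, Matrix.mulVec, dotProduct, Matrix.transpose_apply,
    Matrix.diagonal, Real.tan_eq_sin_div_cos, Fin.sum_univ_three,
    Matrix.cons_val_zero, Matrix.cons_val_one, Matrix.head_cons, Matrix.of_apply,
    Matrix.cons_val', Matrix.empty_val', Matrix.cons_val_fin_one, Matrix.head_fin_const,
    Matrix.cons_val_two, Matrix.tail_cons]
  norm_num [Fin.ext_iff]
  constructor
  · field_simp
    linear_combination Real.cos yd * hkrr - Real.sin yd * Real.cos p * hkpp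
      + Real.cos p * τxd * hsc
  · field_simp
    linear_combination Real.sin yd * hkrr + Real.cos yd * Real.cos p * hkpp
      + Real.cos p * τyd * hsc
end
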